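/- Fix an integer n ≥ 3. Then for every x in the open interval ( 2^{n−2}/(2^{n−1}+1) , 2^{n−2}/(2^{n−1}−1) ) with x ≠ 1/2, the points x, T(x), …, T^{n−1}(x) are pairwise distinct and Pat(x, T, n) = σ_n, the permutation (n−1) n 1 2 3 ⋯ (n−2). Equivalently, T²(x) < T³(x) < ⋯ < T^{n−1}(x) < x < T(x). -/

import Mathlib

/-!
Put `d = |2x - 1|`. Since `T y = 1 - |2y - 1|`, the orbit of `x` is
`x, 1 - d, 2d, 4d, …, 2^(n-2) d` for as long as these doublings stay below `1`, and the
interval of the statement is exactly the set where `2^(n-2) d < x`. Together with `d > 0`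
(as `x ≠ 1/2`) this gives `T²x < T³x < ⋯ < T^(n-1)x < x < Tx`, which is the pattern `σ_n`
because `σ_n⁻¹` lists the indices in the order `2, 3, …, n-1, 0, 1`.
-/

open Set

/-- The symmetric tent map of height `μ`:
`T_μ(x) = 2μx` for `x ≤ 1/2` and `T_μ(x) = 2μ(1-x)` for `x > 1/2`. -/
noncomputable def tentMap (μ : ℝ) (x : ℝ) : ℝ :=
  if x ≤ 1/2 then 2*μ*x else 2*μ*(1-x)

/-- The permutation σ_n = (n-1) n 1 2 ⋯ (n-2) (one-line notation, 1-indexed), i.e. in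
0-indexed terms the map `i ↦ i + (n-2) (mod n)` on `Fin n`. -/
def sigmaPerm (n : ℕ) : Equiv.Perm (Fin n) := finRotate n ^ (n - 2)

lemma val_finRotate_pow_apply {n : ℕ} (k : ℕ) (i : Fin n) :
    ((finRotate n ^ k) i : ℕ) = (i + k) % n := by
  have := i.neZero
  induction k with
  | zero => simp [Nat.mod_eq_of_lt i.isLt]
  | succ k ih =>
    rw [pow_succ', Equiv.Perm.mul_apply, finRotate_apply, Fin.val_add, Fin.val_one', ih,
      Nat.add_mod_mod, Nat.mod_add_mod, add_assoc]

lemma val_sigmaPerm_symm_apply {n : ℕ} (hn : 2 ≤ n) (k : Fin n) :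
    ((sigmaPerm n).symm k : ℕ) = (k + 2) % n := by
  set j := (sigmaPerm n).symm k
  have hj : ((sigmaPerm n j : Fin n) : ℕ) = (j + (n - 2)) % n := val_finRotate_pow_apply _ _
  rw [Equiv.apply_symm_apply] at hj
  rw [hj, Nat.mod_add_mod, add_assoc, Nat.sub_add_cancel hn, Nat.add_mod_right,
    Nat.mod_eq_of_lt j.isLt]

lemma lt_iff_lt_of_strictMono_comp_symm {ι α : Type*} [LinearOrder ι] [Preorder α]
    {σ : Equiv.Perm ι} {a : ι → α} (h : StrictMono fun k => a (σ.symm k)) (i j : ι) :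
    σ i < σ j ↔ a i < a j := by
  simpa using (h.lt_iff_lt (a := σ i) (b := σ j)).symm

lemma injective_of_strictMono_comp_symm {ι α : Type*} [LinearOrder ι] [Preorder α]
    {σ : Equiv.Perm ι} {a : ι → α} (h : StrictMono fun k => a (σ.symm k)) :
    Function.Injective a := by
  simpa [Function.comp_def] using h.injective.comp σ.injective

lemma strictMono_comp_sigmaPerm_symm {α : Type*} [Preorder α] {a : ℕ → α} {m : ℕ}
    (hchain : ∀ k < m, a (k + 2) < a (k + 3)) (hlast : a (m + 2) < a 0) (h01 : a 0 < a 1) :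
    StrictMono fun k : Fin (m + 3) => a ((sigmaPerm (m + 3)).symm k) := by
  simp only [val_sigmaPerm_symm_apply (by omega : 2 ≤ m + 3)]
  rw [Fin.strictMono_iff_lt_succ]
  intro i
  simp only [Fin.val_castSucc, Fin.val_succ]
  obtain hi | hi | hi : (i : ℕ) < m ∨ (i : ℕ) = m ∨ (i : ℕ) = m + 1 := by omega
  · rw [Nat.mod_eq_of_lt (by omega), Nat.mod_eq_of_lt (by omega)]
    exact hchain i hi
  · rwa [hi, Nat.mod_eq_of_lt (by omega), Nat.add_assoc, Nat.mod_self]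
  · rwa [hi, show m + 1 + 2 = m + 3 by omega, Nat.mod_self,
      show m + 1 + 1 + 2 = 1 + (m + 3) by omega, Nat.add_mod_right, Nat.mod_eq_of_lt (by omega)]

lemma tentMap_one_apply (x : ℝ) : tentMap 1 x = 1 - |2 * x - 1| := by
  unfold tentMap
  split_ifs with h
  · rw [abs_of_nonpos (by linarith)]; ring
  · rw [abs_of_pos (by linarith)]; ring

lemma iterate_tentMap_one_of_two_pow_mul_le {y : ℝ} {k : ℕ} (hk : 2 ^ k * y ≤ 1) :
    (tentMap 1)^[k] y = 2 ^ k * y := by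
  induction k with
  | zero => simp
  | succ k ih =>
    have hk' : 2 ^ k * y ≤ 1 / 2 := by rw [pow_succ] at hk; linarith
    rw [Function.iterate_succ_apply', ih (by linarith), tentMap_one_apply,
      abs_of_nonpos (by linarith), pow_succ]
    ring

lemma iterate_two_tentMap_one {x : ℝ} (hx : 2 * |2 * x - 1| ≤ 1) :
    (tentMap 1)^[2] x = 2 * |2 * x - 1| := by
  rw [Function.iterate_succ_apply', Function.iterate_one, tentMap_one_apply, tentMap_one_apply,
    abs_of_nonneg (by linarith)]
  ring

lemma iterate_add_two_tentMap_one {x : ℝ} {k : ℕ} (hk : 2 ^ (k + 1) * |2 * x - 1| ≤ 1) :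
    (tentMap 1)^[k + 2] x = 2 ^ (k + 1) * |2 * x - 1| := by
  have h2 : 2 * |2 * x - 1| ≤ 1 :=
    le_trans (by gcongr; exact le_self_pow₀ one_le_two (by omega)) hk
  rw [Function.iterate_add_apply, iterate_two_tentMap_one h2,
    iterate_tentMap_one_of_two_pow_mul_le (by rwa [← mul_assoc, ← pow_succ]),
    ← mul_assoc, ← pow_succ]

lemma lt_tentMap_one_of_two_mul_abs_lt {x : ℝ} (hx : 2 * |2 * x - 1| < x) : x < tentMap 1 x := by
  rw [tentMap_one_apply]
  cases abs_cases (2 * x - 1) <;> linarith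

lemma mem_Ioo_iff_two_pow_mul_abs_lt (k : ℕ) (x : ℝ) :
    x ∈ Ioo ((2:ℝ) ^ k / (2 ^ (k + 1) + 1)) (2 ^ k / (2 ^ (k + 1) - 1)) ↔
      2 ^ k * |2 * x - 1| < x := by
  have h1 : (1:ℝ) ≤ 2 ^ k := one_le_pow₀ (by norm_num)
  have habs : 2 ^ k * |2 * x - 1| = |2 ^ k * (2 * x - 1)| := by
    rw [abs_mul, abs_pow, abs_two]
  rw [mem_Ioo, div_lt_iff₀ (by positivity), lt_div_iff₀ (by rw [pow_succ]; linarith), pow_succ,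
    habs, abs_lt]
  constructor <;> rintro ⟨h₁, h₂⟩ <;> constructor <;> linarith

lemma strictMono_iterate_tentMap_one_sigmaPerm_symm {x : ℝ} {m : ℕ} (hd : 0 < |2 * x - 1|)
    (hx : 2 ^ (m + 1) * |2 * x - 1| < x) :
    StrictMono fun k : Fin (m + 3) => (tentMap 1)^[((sigmaPerm (m + 3)).symm k : ℕ)] x := by
  have hx_lt : x < tentMap 1 x := by
    refine lt_tentMap_one_of_two_mul_abs_lt (lt_of_le_of_lt ?_ hx)
    gcongr
    exact le_self_pow₀ one_le_two (by omega)
  have hx_le : x ≤ 1 := by linarith [tentMap_one_apply x, abs_nonneg (2 * x - 1)]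
  have hbound : ∀ k ≤ m, 2 ^ (k + 1) * |2 * x - 1| ≤ 1 := fun k hk =>
    le_trans (by gcongr; exact one_le_two) (hx.trans_le hx_le).le
  apply strictMono_comp_sigmaPerm_symm (a := fun j => (tentMap 1)^[j] x)
  · intro k hk
    rw [iterate_add_two_tentMap_one (hbound k hk.le), show k + 3 = k + 1 + 2 by omega,
      iterate_add_two_tentMap_one (hbound (k + 1) hk)]
    gcongr
    exacts [one_lt_two, by omega]
  · rwa [iterate_add_two_tentMap_one (hbound m le_rfl)]
  · exact hx_lt

theorem pattern_near_half (n : ℕ) (hn : 3 ≤ n) (x : ℝ)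
    (hx : x ∈ Ioo ((2:ℝ)^(n-2)/((2:ℝ)^(n-1)+1)) ((2:ℝ)^(n-2)/((2:ℝ)^(n-1)-1)))
    (hxh : x ≠ 1/2) :
    (∀ i j : Fin n, i ≠ j → (tentMap 1)^[(i:ℕ)] x ≠ (tentMap 1)^[(j:ℕ)] x) ∧
    (∀ i j : Fin n, sigmaPerm n i < sigmaPerm n j ↔
      (tentMap 1)^[(i:ℕ)] x < (tentMap 1)^[(j:ℕ)] x) := by
  obtain ⟨m, rfl⟩ : ∃ m, n = m + 3 := ⟨n - 3, by omega⟩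
  rw [show m + 3 - 2 = m + 1 by omega, show m + 3 - 1 = m + 1 + 1 by omega,
    mem_Ioo_iff_two_pow_mul_abs_lt] at hx
  have hd : 0 < |2 * x - 1| := abs_pos.2 (by contrapose! hxh; linarith)
  have hmono := strictMono_iterate_tentMap_one_sigmaPerm_symm hd hx
  exact ⟨fun i j hij => (injective_of_strictMono_comp_symm
    (a := fun i : Fin (m + 3) => (tentMap 1)^[(i : ℕ)] x) hmono).ne hij,
    lt_iff_lt_of_strictMono_comp_symm hmono⟩
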